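/- Let R : ℝ^n → ℝ be 1-strongly convex with respect to ‖·‖₁ on the probability simplex Δ_n, let ε > 0, let u₁, …, u_T ∈ ℝ^n (with the convention u₀ = 0), and let w₁, …, w_T be the OFTRL iterates. Then for every π ∈ Δ_n: ∑_{t=1}^{T} ⟨π − w_t, u_t⟩ ≤ Δ_R/ε + ε · ∑_{t=1}^{T} ‖u_t − u_{t−1}‖_∞² − (1/(4ε)) · ∑_{t=2}^{T} ‖w_t − w_{t−1}‖₁², where Δ_R = sup_{w ∈ Δ_n} R(w) − inf_{w ∈ Δ_n} R(w). -/

import Mathlib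

/-- L1 norm: ‖x‖₁ = ∑ i, |x i|. -/
def l1 {n : ℕ} (x : Fin n → ℝ) : ℝ := ∑ i, |x i|

/-- L∞ norm: ‖x‖_∞ = max_i |x i|. -/
noncomputable def linf {n : ℕ} [NeZero n] (x : Fin n → ℝ) : ℝ :=
  Finset.univ.sup' Finset.univ_nonempty (fun i => |x i|)

/-- Dot product ⟨x, y⟩ = ∑ i, x i · y i. -/
def dotn {n : ℕ} (x y : Fin n → ℝ) : ℝ := ∑ i, x i * y i

/-- R is 1-strongly convex with respect to ‖·‖₁ on the probability simplex Δ_n. -/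
def StrongConvexOnSimplex {n : ℕ} (R : (Fin n → ℝ) → ℝ) : Prop :=
  ∀ w w' : Fin n → ℝ, w ∈ stdSimplex ℝ (Fin n) → w' ∈ stdSimplex ℝ (Fin n) →
    ∀ t : ℝ, 0 ≤ t → t ≤ 1 →
      R (t • w + (1 - t) • w') ≤ t * R w + (1 - t) * R w'
        - (t * (1 - t) / 2) * (l1 (w - w')) ^ 2

/-- w₁, …, w_T are OFTRL iterates for utilities u (with u 0 = 0):
for each 1 ≤ t ≤ T, w t maximizes ⟨w, u_{t−1} + ∑_{τ=1}^{t−1} u_τ⟩ − R(w)/ε over Δ_n. -/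
def OFTRL {n : ℕ} (R : (Fin n → ℝ) → ℝ) (ε : ℝ) (T : ℕ)
    (u : ℕ → Fin n → ℝ) (w : ℕ → Fin n → ℝ) : Prop :=
  ∀ t : ℕ, 1 ≤ t → t ≤ T →
    w t ∈ stdSimplex ℝ (Fin n) ∧
    ∀ v ∈ stdSimplex ℝ (Fin n),
      dotn v (u (t - 1) + ∑ τ ∈ Finset.Icc 1 (t - 1), u τ) - R v / ε ≤
      dotn (w t) (u (t - 1) + ∑ τ ∈ Finset.Icc 1 (t - 1), u τ) - R (w t) / ε

section Aux

lemma l1_nonneg' {n : ℕ} (x : Fin n → ℝ) : 0 ≤ l1 x :=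
  Finset.sum_nonneg fun i _ => abs_nonneg _

lemma l1_sub_comm {n : ℕ} (x y : Fin n → ℝ) : l1 (x - y) = l1 (y - x) := by
  unfold l1; apply Finset.sum_congr rfl; intro i _
  simp [Pi.sub_apply, abs_sub_comm]

lemma dotn_le_l1_linf {n : ℕ} [NeZero n] (x y : Fin n → ℝ) :
    dotn x y ≤ l1 x * linf y := by
  unfold dotn l1
  rw [Finset.sum_mul]
  apply Finset.sum_le_sum
  intro i _
  calc x i * y i ≤ |x i * y i| := le_abs_self _
    _ = |x i| * |y i| := abs_mul _ _
    _ ≤ |x i| * linf y := by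
      unfold linf
      exact mul_le_mul_of_nonneg_left (Finset.le_sup' (fun j => |y j|) (Finset.mem_univ i)) (abs_nonneg _)

lemma dotn_add_right {n : ℕ} (v a b : Fin n → ℝ) :
    dotn v (a + b) = dotn v a + dotn v b := by
  unfold dotn; rw [← Finset.sum_add_distrib]; apply Finset.sum_congr rfl; intros; simp [mul_add]

lemma dotn_sub_right {n : ℕ} (v a b : Fin n → ℝ) :
    dotn v (a - b) = dotn v a - dotn v b := by
  unfold dotn; rw [← Finset.sum_sub_distrib]; apply Finset.sum_congr rfl; intros; simp [mul_sub]

lemma dotn_sub_left {n : ℕ} (a b v : Fin n → ℝ) :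
    dotn (a - b) v = dotn a v - dotn b v := by
  unfold dotn; rw [← Finset.sum_sub_distrib]; apply Finset.sum_congr rfl; intros; simp [sub_mul]

lemma dotn_smul_add {n : ℕ} (s t : ℝ) (a b v : Fin n → ℝ) :
    dotn (s • a + t • b) v = s * dotn a v + t * dotn b v := by
  unfold dotn; rw [Finset.mul_sum, Finset.mul_sum, ← Finset.sum_add_distrib]
  apply Finset.sum_congr rfl; intros; simp; ring

lemma dotn_sum_right {n : ℕ} (v : Fin n → ℝ) (s : Finset ℕ) (u : ℕ → Fin n → ℝ) :
    dotn v (∑ τ ∈ s, u τ) = ∑ τ ∈ s, dotn v (u τ) := by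
  unfold dotn
  rw [Finset.sum_comm]
  apply Finset.sum_congr rfl; intro i _
  rw [← Finset.mul_sum]
  simp [Finset.sum_apply]

lemma dotn_zero_right {n : ℕ} (v : Fin n → ℝ) : dotn v 0 = 0 := by simp [dotn]

lemma amgm (c a b : ℝ) (hc : 0 < c) : a * b ≤ c / 2 * a ^ 2 + 1 / (2 * c) * b ^ 2 := by
  have h2 : (0:ℝ) < 2 * c := by linarith
  rw [div_mul_eq_mul_div, div_mul_eq_mul_div, div_add_div _ _ (by norm_num : (2:ℝ) ≠ 0)
    (ne_of_gt h2), le_div_iff₀ (by positivity)]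
  nlinarith [sq_nonneg (c * a - b)]

lemma telescope (f : ℕ → ℝ) (T : ℕ) :
    ∑ t ∈ Finset.Icc 1 T, (f t - f (t - 1)) = f T - f 0 := by
  induction T with
  | zero => simp
  | succ T ih => rw [Finset.sum_Icc_succ_top (by omega), ih]; simp

variable {n : ℕ} [NeZero n] {R : (Fin n → ℝ) → ℝ}

lemma single_mem_simplex (i : Fin n) : (Pi.single i 1 : Fin n → ℝ) ∈ stdSimplex ℝ (Fin n) := by
  constructor
  · intro j
    rcases eq_or_ne j i with h | h <;> simp [Pi.single_apply, h]
  · simp [Finset.sum_pi_single']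

lemma R_convexOn (hR : StrongConvexOnSimplex R) : ConvexOn ℝ (stdSimplex ℝ (Fin n)) R := by
  refine ⟨convex_stdSimplex ℝ (Fin n), ?_⟩
  intro x hx y hy a b ha hb hab
  have := hR x y hx hy a ha (by linarith)
  have hb' : b = 1 - a := by linarith
  have hnn : 0 ≤ (a * (1 - a) / 2) * (l1 (x - y))^2 := by
    have h0 := sq_nonneg (l1 (x - y))
    have : 0 ≤ a * (1-a) / 2 := by nlinarith
    positivity
  rw [hb']
  simp only [smul_eq_mul]
  linarith

lemma R_bounds (hR : StrongConvexOnSimplex R) :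
    ∃ m M : ℝ, ∀ v ∈ stdSimplex ℝ (Fin n), m ≤ R v ∧ R v ≤ M := by
  have hconv := R_convexOn hR
  set M : ℝ := Finset.univ.sup' Finset.univ_nonempty (fun i => R (Pi.single i 1)) with hM
  have hub : ∀ v ∈ stdSimplex ℝ (Fin n), R v ≤ M := by
    intro v hv
    have hrep : v = ∑ i : Fin n, v i • (Pi.single i 1 : Fin n → ℝ) := by
      funext j
      simp only [Finset.sum_apply, Pi.smul_apply, Pi.single_apply, smul_eq_mul]
      rw [Finset.sum_congr rfl (fun i _ => by rw [mul_ite, mul_one, mul_zero])]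
      simp
    calc R v = R (∑ i : Fin n, v i • (Pi.single i 1 : Fin n → ℝ)) := by rw [← hrep]
      _ ≤ ∑ i : Fin n, v i • R (Pi.single i 1) :=
          hconv.map_sum_le (fun i _ => hv.1 i) hv.2 (fun i _ => single_mem_simplex i)
      _ ≤ ∑ i : Fin n, v i * M := by
          apply Finset.sum_le_sum; intro i _
          exact mul_le_mul_of_nonneg_left
            (Finset.le_sup' (fun i => R (Pi.single i 1)) (Finset.mem_univ i)) (hv.1 i)
      _ = M := by rw [← Finset.sum_mul, hv.2, one_mul]
  set c : Fin n → ℝ := fun _ => (n : ℝ)⁻¹ with hc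
  have hn0 : 0 < (n:ℝ) := by exact_mod_cast Nat.pos_of_ne_zero (NeZero.ne n)
  have hcmem : c ∈ stdSimplex ℝ (Fin n) := by
    constructor
    · intro j; positivity
    · simp [hc, Finset.sum_const, Finset.card_univ]
  rcases eq_or_lt_of_le (show 1 ≤ n from Nat.pos_of_ne_zero (NeZero.ne n)) with h1 | h2
  · refine ⟨R c, M, fun v hv => ⟨?_, hub v hv⟩⟩
    have : v = c := by
      funext j
      have hsum := hv.2
      have : Finset.univ (α := Fin n) = {j} := by
        apply Finset.eq_singleton_iff_unique_mem.mpr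
        exact ⟨Finset.mem_univ j, fun x _ => by omega⟩
      rw [this, Finset.sum_singleton] at hsum
      simp [hc, ← h1, hsum]
    rw [this]
  · refine ⟨(n : ℝ) * R c - ((n:ℝ) - 1) * M, M, fun v hv => ⟨?_, hub v hv⟩⟩
    have hn1 : (1:ℝ) < (n:ℝ) := by exact_mod_cast h2
    set y : Fin n → ℝ := fun i => (1 - v i) / ((n:ℝ) - 1) with hy
    have hvle : ∀ i, v i ≤ 1 := by
      intro i
      calc v i ≤ ∑ j, v j := Finset.single_le_sum (fun j _ => hv.1 j) (Finset.mem_univ i)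
        _ = 1 := hv.2
    have hymem : y ∈ stdSimplex ℝ (Fin n) := by
      constructor
      · intro j
        apply div_nonneg (by linarith [hvle j]) (by linarith)
      · rw [hy]
        simp only
        rw [← Finset.sum_div, Finset.sum_sub_distrib, hv.2, Finset.sum_const, Finset.card_univ,
          Fintype.card_fin]
        simp only [nsmul_eq_mul, mul_one]
        exact div_self (sub_ne_zero.mpr (ne_of_gt hn1))
    have hcomb : ((n:ℝ)⁻¹) • v + (1 - (n:ℝ)⁻¹) • y = c := by
      funext j
      simp only [Pi.add_apply, Pi.smul_apply, smul_eq_mul, hy, hc]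
      have hne : (n:ℝ) - 1 ≠ 0 := by linarith
      have hnne : (n:ℝ) ≠ 0 := ne_of_gt hn0
      field_simp
      ring
    have := hR v y hv hymem ((n:ℝ)⁻¹) (by positivity) (by
      rw [inv_le_one_iff₀]; right; linarith)
    rw [hcomb] at this
    have hRy := hub y hymem
    have hl1 := sq_nonneg (l1 (v - y))
    have hinv : (0:ℝ) < (n:ℝ)⁻¹ := by positivity
    have h1n : (0:ℝ) ≤ 1 - (n:ℝ)⁻¹ := by
      rw [sub_nonneg, inv_le_one_iff₀]; right; linarith
    have hterm : 0 ≤ ((n:ℝ)⁻¹ * (1 - (n:ℝ)⁻¹) / 2) * (l1 (v - y))^2 := by positivity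
    have key : R c ≤ (n:ℝ)⁻¹ * R v + (1 - (n:ℝ)⁻¹) * M := by
      nlinarith [mul_le_mul_of_nonneg_left hRy h1n]
    have hnne : (n:ℝ) ≠ 0 := ne_of_gt hn0
    have h3 := mul_le_mul_of_nonneg_left key hn0.le
    have h4 : (n:ℝ) * ((n:ℝ)⁻¹ * R v + (1 - (n:ℝ)⁻¹) * M) = R v + ((n:ℝ) - 1) * M := by
      field_simp
    linarith

end Aux

set_option maxHeartbeats 2000000 in
/-- RVU property, Lemma 4 of the paper: for every π ∈ Δ_n,
∑_{t=1}^{T} ⟨π − w_t, u_t⟩ ≤ Δ_R/ε + ε·∑_{t=1}^{T} ‖u_t − u_{t−1}‖_∞²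
  − (1/(4ε))·∑_{t=2}^{T} ‖w_t − w_{t−1}‖₁². -/
theorem stmt_11 {n : ℕ} [NeZero n] (R : (Fin n → ℝ) → ℝ)
    (hR : StrongConvexOnSimplex R) (ε : ℝ) (hε : 0 < ε)
    (T : ℕ) (u : ℕ → Fin n → ℝ) (hu0 : u 0 = 0)
    (w : ℕ → Fin n → ℝ) (hw : OFTRL R ε T u w)
    (ΔR : ℝ) (hΔR : ΔR = sSup (R '' stdSimplex ℝ (Fin n)) - sInf (R '' stdSimplex ℝ (Fin n))) :
    ∀ π ∈ stdSimplex ℝ (Fin n),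
      ∑ t ∈ Finset.Icc 1 T, dotn (π - w t) (u t) ≤
        ΔR / ε + ε * ∑ t ∈ Finset.Icc 1 T, (linf (u t - u (t - 1))) ^ 2
          - (1 / (4 * ε)) * ∑ t ∈ Finset.Icc 2 T, (l1 (w t - w (t - 1))) ^ 2 := by
  intro π hπ
  classical
  obtain ⟨m, M, hmM⟩ := R_bounds hR
  have hne : ε ≠ 0 := ne_of_gt hε
  have hΔne : (stdSimplex ℝ (Fin n)).Nonempty := ⟨π, hπ⟩
  set S : ℕ → Fin n → ℝ := fun t => ∑ τ ∈ Finset.Icc 1 t, u τ with hS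
  set φ : ℕ → (Fin n → ℝ) → ℝ := fun t v => ε * dotn v (S t) - R v with hφ
  have hl1one : ∀ v ∈ stdSimplex ℝ (Fin n), l1 v = 1 := by
    intro v hv
    unfold l1
    rw [← hv.2]
    exact Finset.sum_congr rfl fun i _ => abs_of_nonneg (hv.1 i)
  have hbdd : ∀ t, BddAbove (φ t '' stdSimplex ℝ (Fin n)) := by
    intro t
    refine ⟨ε * linf (S t) - m, ?_⟩
    rintro x ⟨v, hv, rfl⟩
    have h1 : dotn v (S t) ≤ linf (S t) := by
      have h := dotn_le_l1_linf v (S t)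
      rwa [hl1one v hv, one_mul] at h
    have h2 := (hmM v hv).1
    have h3 := mul_le_mul_of_nonneg_left h1 hε.le
    simp only [hφ]
    linarith
  set Z : ℕ → ℝ := fun t => sSup (φ t '' stdSimplex ℝ (Fin n)) with hZ
  have hZ_le : ∀ t, ∀ v ∈ stdSimplex ℝ (Fin n), φ t v ≤ Z t :=
    fun t v hv => le_csSup (hbdd t) ⟨v, hv, rfl⟩
  have hZ_ub : ∀ (t : ℕ) (c : ℝ), (∀ v ∈ stdSimplex ℝ (Fin n), φ t v ≤ c) → Z t ≤ c := by
    intro t c hc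
    apply csSup_le (hΔne.image _)
    rintro x ⟨v, hv, rfl⟩
    exact hc v hv
  -- scaled optimality
  have hopt : ∀ t, 1 ≤ t → t ≤ T → ∀ v ∈ stdSimplex ℝ (Fin n),
      ε * dotn v (u (t-1) + S (t-1)) - R v ≤ ε * dotn (w t) (u (t-1) + S (t-1)) - R (w t) := by
    intro t h1 h2 v hv
    have h := (hw t h1 h2).2 v hv
    have h' := mul_le_mul_of_nonneg_left h hε.le
    rw [mul_sub, mul_sub, mul_div_cancel₀ _ hne, mul_div_cancel₀ _ hne] at h'
    exact h'
  -- scaled optimality gap (Fact A')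
  have hgap : ∀ t, 1 ≤ t → t ≤ T → ∀ v ∈ stdSimplex ℝ (Fin n),
      ε * dotn v (u (t-1) + S (t-1)) - R v + 1/2 * (l1 (w t - v))^2 ≤
      ε * dotn (w t) (u (t-1) + S (t-1)) - R (w t) := by
    intro t h1 h2 v hv
    have hwt := (hw t h1 h2).1
    set G := u (t-1) + S (t-1) with hG
    set K := (l1 (w t - v))^2 with hKdef
    have hK0 : 0 ≤ K := sq_nonneg _
    have hstep : ∀ s : ℝ, 0 < s → s < 1 →
        (1 - s)/2 * K ≤ (ε * dotn (w t) G - R (w t)) - (ε * dotn v G - R v) := by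
      intro s hs0 hs1
      have hp : s • v + (1-s) • w t ∈ stdSimplex ℝ (Fin n) :=
        convex_stdSimplex ℝ (Fin n) hv hwt hs0.le (by linarith) (by ring)
      have h1' := hopt t h1 h2 _ hp
      have h2' := hR v (w t) hv hwt s hs0.le hs1.le
      have h3 : dotn (s • v + (1-s) • w t) G = s * dotn v G + (1-s) * dotn (w t) G :=
        dotn_smul_add s (1-s) v (w t) G
      rw [h3] at h1'
      have hK' : (l1 (v - w t))^2 = K := by rw [hKdef, l1_sub_comm]
      rw [hK'] at h2'
      nlinarith [mul_le_mul_of_nonneg_left h2' hε.le, mul_pos hs0 hε, hs0, hK0,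
        mul_nonneg hs0.le hK0]
    by_contra hcon
    push_neg at hcon
    set gap := (ε * dotn (w t) G - R (w t)) - (ε * dotn v G - R v) with hgapdef
    have hgK : gap < 1/2 * K := by linarith
    have hg0 : 1/4 * K ≤ gap := by
      have := hstep (1/2) (by norm_num) (by norm_num)
      linarith
    have hKpos : 0 < K := by nlinarith
    have hges0 : 0 ≤ gap := le_trans (by positivity) hg0
    set s0 := (1 - 2*gap/K)/2 with hs0def
    have h2g : 2*gap/K < 1 := by
      rw [div_lt_one hKpos]; linarith
    have h2g0 : 0 ≤ 2*gap/K := by positivity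
    have hs0pos : 0 < s0 := by rw [hs0def]; linarith
    have hs0lt : s0 < 1 := by rw [hs0def]; linarith
    have hst := hstep s0 hs0pos hs0lt
    have hexp : (1 - s0)/2 * K = K/4 + gap/2 := by
      rw [hs0def]
      field_simp
      ring
    rw [hexp] at hst
    linarith
  clear_value Z φ S
  -- per-step claim
  have claim : ∀ t, 1 ≤ t → t ≤ T →
      Z t - Z (t-1) ≤ ε * dotn (w t) (u t) + ε^2/2 * (linf (u t - u (t-1)))^2 +
        (if 2 ≤ t then ε^2/2 * (linf (u (t-1) - u (t-1-1)))^2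
          - 1/4 * (l1 (w t - w (t-1)))^2 else 0) := by
    intro t ht1 ht2
    have hwt := (hw t ht1 ht2).1
    have hSrec : ∀ s : ℕ, 1 ≤ s → S s = S (s-1) + u s := by
      intro s hs
      obtain ⟨s', rfl⟩ : ∃ s', s = s' + 1 := ⟨s - 1, by omega⟩
      simp only [hS, Nat.add_sub_cancel]
      rw [Finset.sum_Icc_succ_top (by omega)]
    -- Part 1
    have part1 : Z t ≤ φ (t-1) (w t) + ε * dotn (w t) (u t)
        + ε^2/2 * (linf (u t - u (t-1)))^2 := by
      apply hZ_ub
      intro v hv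
      have hg := hgap t ht1 ht2 v hv
      have e1 : φ t v = (ε * dotn v (u (t-1) + S (t-1)) - R v)
          + ε * dotn v (u t - u (t-1)) := by
        simp only [hφ, hSrec t ht1, dotn_add_right, dotn_sub_right]
        ring
      have e2 : ε * dotn (w t) (u (t-1) + S (t-1)) - R (w t)
          = φ (t-1) (w t) + ε * dotn (w t) (u (t-1)) := by
        simp only [hφ, dotn_add_right]
        ring
      have e5 : dotn (w t) (u t - u (t-1)) = dotn (w t) (u t) - dotn (w t) (u (t-1)) :=
        dotn_sub_right _ _ _
      have e3 : ε * dotn v (u t - u (t-1)) = (ε * dotn (w t) (u t) - ε * dotn (w t) (u (t-1)))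
          + ε * (dotn v (u t - u (t-1)) - dotn (w t) (u t - u (t-1))) := by
        rw [e5]; ring
      have e4 : ε * (dotn v (u t - u (t-1)) - dotn (w t) (u t - u (t-1)))
          ≤ 1/2 * (l1 (w t - v))^2 + ε^2/2 * (linf (u t - u (t-1)))^2 := by
        have hh := dotn_le_l1_linf (v - w t) (u t - u (t-1))
        rw [dotn_sub_left, l1_sub_comm] at hh
        have hh' := mul_le_mul_of_nonneg_left hh hε.le
        have ha := amgm 1 (l1 (w t - v)) (ε * linf (u t - u (t-1))) one_pos
        nlinarith [ha, hh']
      linarith [hg, e1, e2, e3, e4]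
    rcases lt_or_ge t 2 with ht | ht
    · -- t = 1
      have ht1' : t = 1 := by omega
      rw [if_neg (by omega)]
      have hz := hZ_le (t-1) (w t) hwt
      linarith [part1, hz]
    · -- t ≥ 2
      rw [if_pos ht]
      have ht1' : 1 ≤ t - 1 := by omega
      have ht2' : t - 1 ≤ T := by omega
      have hwp := (hw (t-1) ht1' ht2').1
      set D := (l1 (w t - w (t-1)))^2 with hDdef
      -- midpoint
      have hp : (1/2 : ℝ) • w t + (1 - 1/2 : ℝ) • w (t-1) ∈ stdSimplex ℝ (Fin n) :=
        convex_stdSimplex ℝ (Fin n) hwt hwp (by norm_num) (by norm_num) (by norm_num)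
      have hsc := hR (w t) (w (t-1)) hwt hwp (1/2) (by norm_num) (by norm_num)
      have hZp := hZ_le (t-1) _ hp
      have hmid : φ (t-1) ((1/2 : ℝ) • w t + (1 - 1/2 : ℝ) • w (t-1))
          = ε * (1/2 * dotn (w t) (S (t-1)) + (1 - 1/2) * dotn (w (t-1)) (S (t-1)))
            - R ((1/2 : ℝ) • w t + (1 - 1/2 : ℝ) • w (t-1)) := by
        simp only [hφ, dotn_smul_add]
      -- gap at time t-1 with v = w t
      have hg2 := hgap (t-1) ht1' ht2' (w t) hwt
      rw [l1_sub_comm (w (t-1)) (w t)] at hg2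
      -- relate G' objective to φ (t-1)
      have hrec : S (t-1) = S (t-1-1) + u (t-1) := hSrec (t-1) ht1'
      have e6 : ∀ x : Fin n → ℝ, ε * dotn x (u (t-1-1) + S (t-1-1)) - R x
          = φ (t-1) x - ε * (dotn x (u (t-1)) - dotn x (u (t-1-1))) := by
        intro x
        simp only [hφ, hrec, dotn_add_right]
        ring
      rw [e6, e6] at hg2
      -- Hölder + AM-GM on the cross term
      have e7 : ε * (dotn (w t) (u (t-1)) - dotn (w t) (u (t-1-1))
            - (dotn (w (t-1)) (u (t-1)) - dotn (w (t-1)) (u (t-1-1))))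
          ≤ 1/4 * D + ε^2 * (linf (u (t-1) - u (t-1-1)))^2 := by
        have hh := dotn_le_l1_linf (w t - w (t-1)) (u (t-1) - u (t-1-1))
        rw [dotn_sub_left, dotn_sub_right, dotn_sub_right] at hh
        have hh' := mul_le_mul_of_nonneg_left hh hε.le
        have ha := amgm (1/2) (l1 (w t - w (t-1))) (ε * linf (u (t-1) - u (t-1-1)))
          (by norm_num)
        linarith [ha, hh', hDdef]
      -- φ(t-1)(w (t-1)) ≥ φ(t-1)(w t) + D/2 - cross
      -- combine with midpoint:
      have hφp : φ (t-1) (w t) ≤ Z (t-1) - 1/4 * D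
          + ε^2/2 * (linf (u (t-1) - u (t-1-1)))^2 := by
        have hRm := hsc
        -- hZp : φ(t-1)(mid) ≤ Z (t-1)
        rw [hmid] at hZp
        -- hg2 (rewritten) : φ(t-1)(w t) - ε*(...) + 1/2 * l1(w t - w(t-1))^2
        --                    ≤ φ(t-1)(w (t-1)) - ε*(...)
        have hφwt : φ (t-1) (w t) = ε * dotn (w t) (S (t-1)) - R (w t) := by
          simp only [hφ]
        have hφwp : φ (t-1) (w (t-1)) = ε * dotn (w (t-1)) (S (t-1)) - R (w (t-1)) := by
          simp only [hφ]
        nlinarith [hg2, hZp, hRm, e7, hφwt, hφwp]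
      linarith
  -- sum up the claims
  have htel := telescope Z T
  have hsum1 : Z T - Z 0 ≤ ∑ t ∈ Finset.Icc 1 T,
      (ε * dotn (w t) (u t) + ε^2/2 * (linf (u t - u (t-1)))^2 +
        (if 2 ≤ t then ε^2/2 * (linf (u (t-1) - u (t-1-1)))^2
          - 1/4 * (l1 (w t - w (t-1)))^2 else 0)) := by
    rw [← htel]
    apply Finset.sum_le_sum
    intro t ht
    rw [Finset.mem_Icc] at ht
    exact claim t ht.1 ht.2
  have hsplit : ∑ t ∈ Finset.Icc 1 T,
      (ε * dotn (w t) (u t) + ε^2/2 * (linf (u t - u (t-1)))^2 +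
        (if 2 ≤ t then ε^2/2 * (linf (u (t-1) - u (t-1-1)))^2
          - 1/4 * (l1 (w t - w (t-1)))^2 else 0))
      = (∑ t ∈ Finset.Icc 1 T, ε * dotn (w t) (u t))
        + ε^2/2 * (∑ t ∈ Finset.Icc 1 T, (linf (u t - u (t-1)))^2)
        + ((∑ t ∈ Finset.Icc 2 T, ε^2/2 * (linf (u (t-1) - u (t-1-1)))^2)
          - 1/4 * (∑ t ∈ Finset.Icc 2 T, (l1 (w t - w (t-1)))^2)) := by
    rw [Finset.sum_add_distrib, Finset.sum_add_distrib, Finset.mul_sum]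
    congr 1
    have hfil : Finset.Icc 2 T = (Finset.Icc 1 T).filter (fun t => 2 ≤ t) := by
      ext x
      simp only [Finset.mem_Icc, Finset.mem_filter]
      omega
    rw [Finset.mul_sum, ← Finset.sum_sub_distrib, hfil, Finset.sum_filter]
  have hshift : ∑ t ∈ Finset.Icc 2 T, ε^2/2 * (linf (u (t-1) - u (t-1-1)))^2
      ≤ ε^2/2 * ∑ t ∈ Finset.Icc 1 T, (linf (u t - u (t-1)))^2 := by
    rw [Finset.mul_sum]
    rw [show ∑ t ∈ Finset.Icc 2 T, ε^2/2 * (linf (u (t-1) - u (t-1-1)))^2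
        = ∑ s ∈ Finset.Icc 1 (T-1), ε^2/2 * (linf (u s - u (s-1)))^2 from
      Finset.sum_nbij' (fun t => t - 1) (fun s => s + 1)
        (by intro a ha; simp only [Finset.mem_Icc] at ha ⊢; omega)
        (by intro a ha; simp only [Finset.mem_Icc] at ha ⊢; omega)
        (by intro a ha; simp only [Finset.mem_Icc] at ha; omega)
        (by intro a ha; simp only [Finset.mem_Icc] at ha; omega)
        (by intro a ha; rfl)]
    apply Finset.sum_le_sum_of_subset_of_nonneg
    · apply Finset.Icc_subset_Icc_right; omega
    · intro i _ _; positivity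
  -- final assembly
  have hA : ∑ t ∈ Finset.Icc 1 T, dotn (π - w t) (u t)
      = dotn π (S T) - ∑ t ∈ Finset.Icc 1 T, dotn (w t) (u t) := by
    rw [hS]
    simp only
    rw [dotn_sum_right, ← Finset.sum_sub_distrib]
    exact Finset.sum_congr rfl fun t _ => dotn_sub_left _ _ _
  have hπZ : ε * dotn π (S T) - R π ≤ Z T := by
    have h := hZ_le T π hπ
    simp only [hφ] at h
    exact h
  have hbb : BddBelow (R '' stdSimplex ℝ (Fin n)) := by
    refine ⟨m, ?_⟩
    rintro x ⟨v, hv, rfl⟩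
    exact (hmM v hv).1
  have hba : BddAbove (R '' stdSimplex ℝ (Fin n)) := by
    refine ⟨M, ?_⟩
    rintro x ⟨v, hv, rfl⟩
    exact (hmM v hv).2
  have hZ0 : Z 0 ≤ -(sInf (R '' stdSimplex ℝ (Fin n))) := by
    apply hZ_ub
    intro v hv
    have hS0 : S 0 = 0 := by
      simp [hS]
    have : sInf (R '' stdSimplex ℝ (Fin n)) ≤ R v := csInf_le hbb ⟨v, hv, rfl⟩
    simp only [hφ, hS0, dotn_zero_right]
    linarith
  have hRπ : R π ≤ sSup (R '' stdSimplex ℝ (Fin n)) := le_csSup hba ⟨π, hπ, rfl⟩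
  have hmulsum : ∑ t ∈ Finset.Icc 1 T, ε * dotn (w t) (u t)
      = ε * ∑ t ∈ Finset.Icc 1 T, dotn (w t) (u t) := by
    rw [Finset.mul_sum]
  rw [← mul_le_mul_iff_right₀ hε]
  have hrhs : ε * (ΔR / ε + ε * ∑ t ∈ Finset.Icc 1 T, (linf (u t - u (t - 1))) ^ 2
      - (1 / (4 * ε)) * ∑ t ∈ Finset.Icc 2 T, (l1 (w t - w (t - 1))) ^ 2)
      = ΔR + ε^2 * ∑ t ∈ Finset.Icc 1 T, (linf (u t - u (t - 1))) ^ 2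
        - 1/4 * ∑ t ∈ Finset.Icc 2 T, (l1 (w t - w (t - 1))) ^ 2 := by
    field_simp
  rw [hrhs, hΔR, hA, mul_sub]
  linarith [hsum1, hsplit ▸ hsum1]
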